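/- For ℙ-almost every ω ∈ Ω, for all z ∈ ℝ^m simultaneously, M_n(Cᵀz, ω) → M_μ(Cᵀz) as n → ∞. -/

import Mathlib

open MeasureTheory Filter Topology Metric ProbabilityTheory
open scoped RealInnerProductSpace Pointwise

noncomputable section

abbrev Euc (k : ℕ) : Type := EuclideanSpace ℝ (Fin k)

/-- Moment generating function of a measure on `Euc k`. -/
def Mgf {k : ℕ} (μ : Measure (Euc k)) (y : Euc k) : ℝ :=
  ∫ x, Real.exp ⟪y, x⟫ ∂μ

/-- Log-moment generating function. -/
def Lmgf {k : ℕ} (μ : Measure (Euc k)) (y : Euc k) : ℝ :=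
  Real.log (Mgf μ y)

/-- MEM function: Fenchel conjugate of the log-moment generating function. -/
def Kappa {k : ℕ} (μ : Measure (Euc k)) (x : Euc k) : EReal :=
  ⨆ y : Euc k, ((⟪y, x⟫ - Lmgf μ y : ℝ) : EReal)

/-- Fenchel conjugate of an extended-real-valued function. -/
def EConj {k : ℕ} (g : Euc k → EReal) (w : Euc k) : EReal :=
  ⨆ z : Euc k, (((⟪z, w⟫ : ℝ) : EReal) - g z)

/-- Properness for extended-real-valued functions. -/
def EProper {k : ℕ} (g : Euc k → EReal) : Prop :=
  (∀ z, g z ≠ ⊥) ∧ (∃ z, g z ≠ ⊤)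

/-- Convexity for extended-real-valued functions. -/
def EConvex {k : ℕ} (g : Euc k → EReal) : Prop :=
  ∀ x y : Euc k, ∀ a b : ℝ, 0 ≤ a → 0 ≤ b → a + b = 1 →
    g (a • x + b • y) ≤ (a : EReal) * g x + (b : EReal) * g y

/-- Epigraphical convergence of a sequence of extended-real-valued functions. -/
def EpiConverges {F : Type*} [TopologicalSpace F] (f : ℕ → F → EReal) (g : F → EReal) : Prop :=
  (∀ z : F, ∀ zs : ℕ → F, Tendsto zs atTop (𝓝 z) →
      g z ≤ Filter.liminf (fun n => f n (zs n)) atTop) ∧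
  (∀ z : F, ∃ zs : ℕ → F, Tendsto zs atTop (𝓝 z) ∧
      Filter.limsup (fun n => f n (zs n)) atTop ≤ g z)

variable {d m : ℕ}

/-- Primal MEM objective `x ↦ α g(Cx) + κ_μ(x)`. -/
def PrimalObj (α : ℝ) (g : Euc m → EReal) (C : Euc d →L[ℝ] Euc m)
    (μ : Measure (Euc d)) (x : Euc d) : EReal :=
  (α : EReal) * g (C x) + Kappa μ x

/-- Dual MEM objective `z ↦ α g*(-z/α) + L_μ(Cᵀ z)` for general fidelity. -/
def DualObj (α : ℝ) (g : Euc m → EReal) (C : Euc d →L[ℝ] Euc m)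
    (μ : Measure (Euc d)) (z : Euc m) : EReal :=
  (α : EReal) * EConj g (-(α⁻¹ • z)) +
    ((Lmgf μ (ContinuousLinearMap.adjoint C z) : ℝ) : EReal)

/-- Dual MEM objective with quadratic fidelity. -/
def QDual (α : ℝ) (b : Euc m) (C : Euc d →L[ℝ] Euc m)
    (μ : Measure (Euc d)) (z : Euc m) : ℝ :=
  ‖z‖ ^ 2 / (2 * α) - ⟪b, z⟫ + Lmgf μ (ContinuousLinearMap.adjoint C z)

/-- Empirical moment generating function from samples. -/
def EmpMgf {Ω : Type*} (X : ℕ → Ω → Euc d) (n : ℕ) (ω : Ω) (y : Euc d) : ℝ :=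
  (n : ℝ)⁻¹ * ∑ i ∈ Finset.range n, Real.exp ⟪y, X i ω⟫

/-- Empirical log-moment generating function. -/
def EmpLmgf {Ω : Type*} (X : ℕ → Ω → Euc d) (n : ℕ) (ω : Ω) (y : Euc d) : ℝ :=
  Real.log (EmpMgf X n ω y)

/-- Empirical dual objective, general fidelity. -/
def DualObjEmp {Ω : Type*} (α : ℝ) (g : Euc m → EReal) (C : Euc d →L[ℝ] Euc m)
    (X : ℕ → Ω → Euc d) (n : ℕ) (ω : Ω) (z : Euc m) : EReal :=
  (α : EReal) * EConj g (-(α⁻¹ • z)) +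
    ((EmpLmgf X n ω (ContinuousLinearMap.adjoint C z) : ℝ) : EReal)

/-- Empirical dual objective with quadratic fidelity. -/
def QDualEmp {Ω : Type*} (α : ℝ) (b : Euc m) (C : Euc d →L[ℝ] Euc m)
    (X : ℕ → Ω → Euc d) (n : ℕ) (ω : Ω) (z : Euc m) : ℝ :=
  ‖z‖ ^ 2 / (2 * α) - ⟪b, z⟫ + EmpLmgf X n ω (ContinuousLinearMap.adjoint C z)

/-- `|𝒳| = max_{x ∈ 𝒳} ‖x‖`. -/
def XBound (Xs : Set (Euc d)) : ℝ := sSup ((fun x => ‖x‖) '' Xs)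

/-- The constant `ρ̂`. -/
def rhoHat (α : ℝ) (b : Euc m) (C : Euc d →L[ℝ] Euc m) (Xs : Set (Euc d)) : ℝ :=
  2 * α * (‖b‖ + ‖C‖ * XBound Xs)

/-- The constant `ρ₀`. -/
def rho0 (α : ℝ) (b : Euc m) (C : Euc d →L[ℝ] Euc m) (Xs : Set (Euc d)) : ℝ :=
  max (rhoHat α b C Xs)
    ((rhoHat α b C Xs) ^ 2 / (2 * α) + ‖b‖ * rhoHat α b C Xs +
      rhoHat α b C Xs * ‖C‖ * XBound Xs)

/-- `D_ρ(ν,μ) = max_{z ∈ B_ρ} |L_μ(Cᵀz) − L_ν(Cᵀz)|`. -/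
def Drho (ρ : ℝ) (C : Euc d →L[ℝ] Euc m) (ν μ : Measure (Euc d)) : ℝ :=
  sSup ((fun z => |Lmgf μ (ContinuousLinearMap.adjoint C z) -
      Lmgf ν (ContinuousLinearMap.adjoint C z)|) '' Metric.closedBall (0 : Euc m) ρ)

/-- Smallest singular value of `C`. -/
def sigmaMin (C : Euc d →L[ℝ] Euc m) : ℝ :=
  ⨅ x : Metric.sphere (0 : Euc d) 1, ‖C x.val‖

/-- The set of `ε`-minimizers of the quadratic-fidelity dual objective. -/
def SEps (α : ℝ) (b : Euc m) (C : Euc d →L[ℝ] Euc m) (ν : Measure (Euc d)) (ε : ℝ) :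
    Set (Euc m) :=
  {z | ∀ w, QDual α b C ν z ≤ QDual α b C ν w + ε}

/-!
For a fixed `y`, the strong law of large numbers applied to the i.i.d. integrable variables
`exp ⟪y, Xᵢ⟫` gives almost sure convergence, hence almost surely at all points of a countable
dense set simultaneously. Since the samples lie in the compact set `𝒳`, the empirical moment
generating functions `y ↦ M_n(y, ω)` are equicontinuous in `n` and the limit `M_μ` is
continuous, so the set of points where convergence holds is closed, hence all of `ℝ^d`.
-/

theorem IsCompact.equicontinuous_of_continuous_uncurry {X Y α : Type*} [TopologicalSpace X]
    [TopologicalSpace Y] [UniformSpace α] {f : Y → X → α} {K : Set X} (hK : IsCompact K)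
    (hf : Continuous f.uncurry) :
    Equicontinuous fun x : K => fun y => f y x := by
  intro q U hU
  obtain ⟨v, hv, hvU⟩ :=
    hK.mem_uniformity_of_prod hf.continuousOn (Set.mem_univ q) (symm_le_uniformity hU)
  rw [nhdsWithin_univ] at hv
  filter_upwards [hv] with y hy x using hvU y hy x x.2

theorem EquicontinuousAt.cesaroAverage {X : Type*} [TopologicalSpace X] {F : ℕ → X → ℝ}
    {x₀ : X} (hF : EquicontinuousAt F x₀) :
    EquicontinuousAt (fun (n : ℕ) x => (n : ℝ)⁻¹ * ∑ i ∈ Finset.range n, F i x) x₀ := by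
  rw [Metric.uniformity_basis_dist_le.equicontinuousAt_iff_right] at hF ⊢
  intro ε hε
  filter_upwards [hF ε hε] with x hx n
  calc dist ((n : ℝ)⁻¹ * ∑ i ∈ Finset.range n, F i x₀)
        ((n : ℝ)⁻¹ * ∑ i ∈ Finset.range n, F i x)
      = (n : ℝ)⁻¹ * dist (∑ i ∈ Finset.range n, F i x₀) (∑ i ∈ Finset.range n, F i x) := by
        rw [Real.dist_eq, Real.dist_eq, ← mul_sub, abs_mul, abs_of_nonneg (by positivity)]
    _ ≤ (n : ℝ)⁻¹ * (n * ε) := by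
        gcongr
        simpa using dist_sum_sum_le_of_le (Finset.range n) fun i _ => hx i
    _ ≤ ε := by
        rcases eq_or_ne n 0 with rfl | hn
        · simpa using hε.le
        · rw [inv_mul_cancel_left₀ (Nat.cast_ne_zero.2 hn)]

theorem equicontinuous_empMgf {Ω : Type*} {X : ℕ → Ω → Euc d} {K : Set (Euc d)}
    (hK : IsCompact K) {ω : Ω} (hXK : ∀ i, X i ω ∈ K) :
    Equicontinuous fun n => EmpMgf X n ω := fun y =>
  ((hK.equicontinuous_of_continuous_uncurry (f := fun y x => Real.exp ⟪y, x⟫)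
    (by fun_prop)).comp (fun i => ⟨X i ω, hXK i⟩) y).cesaroAverage

theorem integrable_exp_inner_of_ae_mem {μ : Measure (Euc d)} [IsFiniteMeasure μ]
    {K : Set (Euc d)} (hK : IsCompact K) (hμK : ∀ᵐ x ∂μ, x ∈ K) (y : Euc d) :
    Integrable (fun x => Real.exp ⟪y, x⟫) μ := by
  rw [← Measure.restrict_eq_self_of_ae_mem hμK]
  exact ContinuousOn.integrableOn_compact hK (by fun_prop)

theorem continuous_mgf_of_ae_mem {μ : Measure (Euc d)} [IsFiniteMeasure μ]
    {K : Set (Euc d)} (hK : IsCompact K) (hμK : ∀ᵐ x ∂μ, x ∈ K) :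
    Continuous (Mgf μ) := by
  have hrestrict : Mgf μ = fun y => ∫ x in K, Real.exp ⟪y, x⟫ ∂μ := by
    rw [Measure.restrict_eq_self_of_ae_mem hμK]; rfl
  rw [hrestrict]
  exact continuous_parametric_integral_of_continuous (by fun_prop) hK

theorem ae_tendsto_empMgf {Ω : Type*} [MeasurableSpace Ω] {P : Measure Ω}
    {μ : Measure (Euc d)} {X : ℕ → Ω → Euc d} (hX : ∀ i, Measurable (X i))
    (hlaw : ∀ i, P.map (X i) = μ) (hindep : Pairwise fun i j => IndepFun (X i) (X j) P)
    {y : Euc d} (hint : Integrable (fun x => Real.exp ⟪y, x⟫) μ) :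
    ∀ᵐ ω ∂P, Tendsto (fun n => EmpMgf X n ω y) atTop (𝓝 (Mgf μ y)) := by
  set g : Euc d → ℝ := fun x => Real.exp ⟪y, x⟫
  have hg : Measurable g := by fun_prop
  have hident : ∀ i, IdentDistrib (g ∘ X i) (g ∘ X 0) P P := fun i =>
    (⟨(hX i).aemeasurable, (hX 0).aemeasurable, by rw [hlaw, hlaw]⟩ :
      IdentDistrib (X i) (X 0) P P).comp hg
  have hint₀ : Integrable (g ∘ X 0) P := by
    rwa [← integrable_map_measure hg.aestronglyMeasurable (hX 0).aemeasurable, hlaw]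
  have hmean : P[g ∘ X 0] = Mgf μ y := by
    rw [Mgf, ← hlaw 0, integral_map (hX 0).aemeasurable hg.aestronglyMeasurable]; rfl
  filter_upwards [strong_law_ae_real (fun i => g ∘ X i) hint₀
    (fun i j hij => (hindep hij).comp hg hg) hident] with ω hω
  rw [hmean] at hω
  exact hω.congr fun n => div_eq_inv_mul _ _

theorem ae_forall_tendsto_empMgf {Ω : Type*} [MeasurableSpace Ω] {P : Measure Ω}
    {μ : Measure (Euc d)} [IsFiniteMeasure μ] {K : Set (Euc d)} (hK : IsCompact K)
    (hμK : ∀ᵐ x ∂μ, x ∈ K) {X : ℕ → Ω → Euc d} (hX : ∀ i, Measurable (X i))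
    (hlaw : ∀ i, P.map (X i) = μ) (hindep : Pairwise fun i j => IndepFun (X i) (X j) P)
    (hXK : ∀ i ω, X i ω ∈ K) :
    ∀ᵐ ω ∂P, ∀ y, Tendsto (fun n => EmpMgf X n ω y) atTop (𝓝 (Mgf μ y)) := by
  obtain ⟨u, hu⟩ := TopologicalSpace.exists_dense_seq (Euc d)
  have hdense : ∀ᵐ ω ∂P, ∀ k, Tendsto (fun n => EmpMgf X n ω (u k)) atTop (𝓝 (Mgf μ (u k))) :=
    ae_all_iff.2 fun k =>
      ae_tendsto_empMgf hX hlaw hindep (integrable_exp_inner_of_ae_mem hK hμK _)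
  filter_upwards [hdense] with ω hω y
  have hclosed := (equicontinuous_empMgf hK (hXK · ω)).isClosed_setOfPred_tendsto
    (l := atTop) (continuous_mgf_of_ae_mem hK hμK)
  exact hclosed.closure_subset_iff.2 (Set.range_subset_iff.2 hω) (hu y)

theorem empirical_mgf_pointwise_general
    (d m : ℕ)
    (Xs : Set (Euc d)) (hXc : IsCompact Xs)
    (μ : Measure (Euc d)) (hμP : IsProbabilityMeasure μ) (hμX : ∀ᵐ x ∂μ, x ∈ Xs)
    (C : Euc d →L[ℝ] Euc m)
    (Ω : Type) (mΩ : MeasurableSpace Ω) (P : Measure Ω)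
    (X : ℕ → Ω → Euc d) (hXmeas : ∀ i, Measurable (X i))
    (hlaw : ∀ i, Measure.map (X i) P = μ)
    (hindep : iIndepFun X P)
    (hXval : ∀ i ω, X i ω ∈ Xs) :
    ∀ᵐ ω ∂P, ∀ z : Euc m,
      Tendsto (fun n => EmpMgf X n ω (ContinuousLinearMap.adjoint C z)) atTop
        (𝓝 (Mgf μ (ContinuousLinearMap.adjoint C z))) := by
  filter_upwards [ae_forall_tendsto_empMgf hXc hμX hXmeas hlaw
    (fun i j hij => hindep.indepFun hij) hXval] with ω hω z using hω _

/-- a.s. pointwise convergence of empirical moment generating functions. -/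
theorem empirical_mgf_pointwise
    (d m : ℕ) (hd : 0 < d) (hm : 0 < m)
    (Xs : Set (Euc d)) (hXc : IsCompact Xs) (hXne : Xs.Nonempty)
    (μ : Measure (Euc d)) (hμP : IsProbabilityMeasure μ) (hμX : ∀ᵐ x ∂μ, x ∈ Xs)
    (C : Euc d →L[ℝ] Euc m)
    (Ω : Type) (mΩ : MeasurableSpace Ω) (P : Measure Ω) (hP : IsProbabilityMeasure P)
    (X : ℕ → Ω → Euc d) (hXmeas : ∀ i, Measurable (X i))
    (hlaw : ∀ i, Measure.map (X i) P = μ)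
    (hindep : iIndepFun X P)
    (hXval : ∀ i ω, X i ω ∈ Xs) :
    ∀ᵐ ω ∂P, ∀ z : Euc m,
      Tendsto (fun n => EmpMgf X n ω (ContinuousLinearMap.adjoint C z)) atTop
        (𝓝 (Mgf μ (ContinuousLinearMap.adjoint C z))) :=
  empirical_mgf_pointwise_general d m Xs hXc μ hμP hμX C Ω mΩ P X hXmeas hlaw hindep hXval
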